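/- arXiv:2001.07999 — 2 statements merged into one kernel-verified Lean document; each statement's English description precedes it below -/
import Mathlib

section
/- Let f : ℝ^p → ℝ be a convex function. Then for every x ∈ ℝ^p, the function F_x : λ ↦ sup{⟨z, x⟩ : f(z) ≤ λ} (with values in ℝ ∪ {±∞}) is concave on the set of λ where the sublevel set {z : f(z) ≤ λ} is nonempty. -/
/-! If `f z₁ ≤ l₁` and `f z₂ ≤ l₂`, convexity of `f` puts `t • z₁ + (1 - t) • z₂` in the sublevel
set at `t * l₁ + (1 - t) * l₂`, where the concave objective is at least `t * g z₁ + (1 - t) * g z₂`.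
Approximating both suprema from below by such points gives the concavity inequality. -/

open Set

namespace EReal

lemma exists_mem_le_coe_mul_of_lt_coe_mul_biSup {ι : Type*} {t : ℝ} (ht : 0 < t) {c : EReal}
    {s : Set ι} {g : ι → EReal} (h : c < t * ⨆ i ∈ s, g i) : ∃ i ∈ s, c ≤ t * g i := by
  have ht₀ : (0 : EReal) < t := by exact_mod_cast ht
  have hc : c / t < ⨆ i ∈ s, g i := by
    rw [← not_le, EReal.le_div_iff_mul_le ht₀ (coe_ne_top t), mul_comm, not_le]
    exact h
  obtain ⟨i, hi, hci⟩ := lt_biSup_iff.mp hc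
  exact ⟨i, hi, (EReal.div_le_iff_le_mul ht₀ (coe_ne_top t)).mp hci.le⟩

end EReal

noncomputable def sublevelSup {E : Type*} (f g : E → ℝ) (l : ℝ) : EReal :=
  ⨆ z ∈ {z | f z ≤ l}, (g z : EReal)

lemma ConvexOn.combo_sublevelSup_le {E : Type*} [AddCommMonoid E] [Module ℝ E] {f g : E → ℝ}
    (hf : ConvexOn ℝ univ f) (hg : ConcaveOn ℝ univ g) (l₁ l₂ : ℝ) {t : ℝ} (ht : t ∈ Icc 0 1) :
    (t : EReal) * sublevelSup f g l₁ + ((1 - t : ℝ) : EReal) * sublevelSup f g l₂ ≤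
      sublevelSup f g (t * l₁ + (1 - t) * l₂) := by
  -- Approximating a supremum needs a positive weight; at the endpoints one term is `0 * _ = 0`.
  rcases ht.1.eq_or_lt with rfl | ht₀
  · simp
  rcases ht.2.eq_or_lt with rfl | ht₁
  · simp
  have ht₁' : 0 < 1 - t := sub_pos.mpr ht₁
  refine EReal.add_le_of_forall_lt fun a ha b hb => ?_
  obtain ⟨z₁, hz₁, ha⟩ := EReal.exists_mem_le_coe_mul_of_lt_coe_mul_biSup ht₀ ha
  obtain ⟨z₂, hz₂, hb⟩ := EReal.exists_mem_le_coe_mul_of_lt_coe_mul_biSup ht₁' hb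
  have hmem : f (t • z₁ + (1 - t) • z₂) ≤ t * l₁ + (1 - t) * l₂ :=
    (hf.2 trivial trivial ht₀.le ht₁'.le (add_sub_cancel t 1)).trans <|
      add_le_add (mul_le_mul_of_nonneg_left hz₁ ht₀.le) (mul_le_mul_of_nonneg_left hz₂ ht₁'.le)
  have hval : t * g z₁ + (1 - t) * g z₂ ≤ g (t • z₁ + (1 - t) • z₂) :=
    hg.2 trivial trivial ht₀.le ht₁'.le (add_sub_cancel t 1)
  calc a + b ≤ (t : EReal) * g z₁ + ((1 - t : ℝ) : EReal) * g z₂ := add_le_add ha hb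
    _ = ((t * g z₁ + (1 - t) * g z₂ : ℝ) : EReal) := by push_cast; rfl
    _ ≤ g (t • z₁ + (1 - t) • z₂) := EReal.coe_le_coe_iff.mpr hval
    _ ≤ sublevelSup f g (t * l₁ + (1 - t) * l₂) := le_biSup (fun z => (g z : EReal)) hmem

theorem stmt4 (p : ℕ) (f : EuclideanSpace ℝ (Fin p) → ℝ)
    (hf : ConvexOn ℝ Set.univ f) (x : EuclideanSpace ℝ (Fin p)) :
    ∀ l₁ l₂ : ℝ, {z | f z ≤ l₁}.Nonempty → {z | f z ≤ l₂}.Nonempty →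
      ∀ t ∈ Set.Icc (0 : ℝ) 1,
        ((t : ℝ) : EReal) * (⨆ z ∈ {z | f z ≤ l₁}, ((inner ℝ z x : ℝ) : EReal)) +
          (((1 - t : ℝ)) : EReal) * (⨆ z ∈ {z | f z ≤ l₂}, ((inner ℝ z x : ℝ) : EReal)) ≤
        ⨆ z ∈ {z | f z ≤ t * l₁ + (1 - t) * l₂}, ((inner ℝ z x : ℝ) : EReal) := by
  intro l₁ l₂ _ _ t ht
  have hinner : ConcaveOn ℝ univ fun z : EuclideanSpace ℝ (Fin p) => inner ℝ z x :=
    ((innerₛₗ ℝ x).concaveOn convex_univ).congr fun z _ => real_inner_comm z x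
  exact hf.combo_sublevelSup_le hinner l₁ l₂ ht
end

section
/- Let g, f with g : ℝ → ℝ and f : ℝ^p → ℝ be C^k functions, m ≤ k, and i₁,…,i_m ∈ {1,…,p}. Then ∂^m (g∘f)/∂x_{i₁}⋯∂x_{i_m} (x) = Σ_{π ∈ P} g^{(|π|)}(f(x)) · Π_{B ∈ π} ∂^{|B|} f / Π_{l ∈ B} ∂x_{i_l} (x), where P is the set of partitions of {1,…,m}. -/
open scoped Classical in
/-- The set of partitions of `{0, …, m-1}` encoded as finsets of nonempty disjoint blocks
covering `Finset.univ : Finset (Fin m)`. -/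
noncomputable def partitionsOf (m : ℕ) : Finset (Finset (Finset (Fin m))) :=
  (Finset.univ : Finset (Fin m)).powerset.powerset.filter
    (fun π => (∅ ∉ π) ∧ ∀ i : Fin m, ∃! B, B ∈ π ∧ i ∈ B)

/-!
Mathlib's multivariate Faà di Bruno formula (`iteratedFDeriv_comp`) sums over ordered
finpartitions of `Fin m`, i.e. partitions whose blocks are listed by increasing largest element.
Forgetting that order is a bijection onto `partitionsOf m`: on pairwise disjoint nonempty blocks,
ordering by largest element is the colexicographic order, so the order is recovered from the set
of blocks, and every partition arises by listing its blocks colexicographically. For scalar `g`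
the `|π|`-linear term `D^{|π|} g (f x)` factors as `g^{(|π|)} (f x)` times a product.
-/

open Finset Function

theorem iteratedFDeriv_comp_apply_eq_sum_orderedFinpartition {𝕜 E F G : Type*}
    [NontriviallyNormedField 𝕜] [NormedAddCommGroup E] [NormedSpace 𝕜 E]
    [NormedAddCommGroup F] [NormedSpace 𝕜 F] [NormedAddCommGroup G] [NormedSpace 𝕜 G]
    {g : F → G} {f : E → F} {x : E} {n : WithTop ℕ∞} {m : ℕ}
    (hg : ContDiffAt 𝕜 n g (f x)) (hf : ContDiffAt 𝕜 n f x) (hm : m ≤ n) (v : Fin m → E) :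
    iteratedFDeriv 𝕜 m (g ∘ f) x v = ∑ c : OrderedFinpartition m,
      iteratedFDeriv 𝕜 c.length g (f x)
        fun j => iteratedFDeriv 𝕜 (c.partSize j) f x (v ∘ c.emb j) := by
  simp [iteratedFDeriv_comp hg hf hm, FormalMultilinearSeries.taylorComp, ftaylorSeries,
    OrderedFinpartition.applyOrderedFinpartition_apply]

theorem Finset.toColex_lt_toColex_iff_max'_lt_max' {α : Type*} [LinearOrder α]
    {s t : Finset α} (hst : Disjoint s t) (hs : s.Nonempty) (ht : t.Nonempty) :
    toColex s < toColex t ↔ s.max' hs < t.max' ht := by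
  rw [Colex.toColex_lt_toColex_iff_exists_forall_lt]
  constructor
  · rintro ⟨a, hat, -, ha⟩
    exact ((max'_lt_iff _ _).2 fun b hb => ha b hb (disjoint_left.1 hst hb)).trans_le
      (le_max' _ _ hat)
  · intro h
    exact ⟨t.max' ht, max'_mem _ _, disjoint_right.1 hst (max'_mem _ _),
      fun b hb _ => (le_max' _ _ hb).trans_lt h⟩

theorem Finset.apply_orderEmbOfFin_card {α β : Type*} [LinearOrder α] (s : Finset α) {k : ℕ}
    (h : s.card = k) (Φ : (k : ℕ) → (Fin k → α) → β) :
    Φ k (s.orderEmbOfFin h) = Φ s.card (s.orderEmbOfFin rfl) := by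
  subst h
  rfl

namespace OrderedFinpartition

variable {n : ℕ}

section

variable (c : OrderedFinpartition n)

def block (j : Fin c.length) : Finset (Fin n) :=
  univ.map ⟨c.emb j, (c.emb_strictMono j).injective⟩

theorem coe_block (j : Fin c.length) : (c.block j : Set (Fin n)) = Set.range (c.emb j) := by
  simp [block]

theorem card_block (j : Fin c.length) : (c.block j).card = c.partSize j := by
  simp [block]

theorem block_nonempty (j : Fin c.length) : (c.block j).Nonempty := by
  simp [← card_pos, card_block, c.partSize_pos j]

theorem emb_eq_orderEmbOfFin (j : Fin c.length) :
    c.emb j = (c.block j).orderEmbOfFin (c.card_block j) :=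
  orderEmbOfFin_unique _ (fun l => by simp [block]) (c.emb_strictMono j)

theorem apply_emb {β : Type*} (Φ : (k : ℕ) → (Fin k → Fin n) → β) (j : Fin c.length) :
    Φ (c.partSize j) (c.emb j) = Φ (c.block j).card ((c.block j).orderEmbOfFin rfl) := by
  rw [c.emb_eq_orderEmbOfFin j]
  exact apply_orderEmbOfFin_card _ _ Φ

theorem max'_block (j : Fin c.length) :
    (c.block j).max' (c.block_nonempty j) =
      c.emb j ⟨c.partSize j - 1, Nat.sub_one_lt_of_lt (c.partSize_pos j)⟩ := by
  rw [c.emb_eq_orderEmbOfFin j, orderEmbOfFin_last _ (c.partSize_pos j)]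

theorem pairwise_disjoint_block : Pairwise (Disjoint on c.block) := fun j j' h => by
  simpa [onFun, ← disjoint_coe, coe_block] using c.disjoint (Set.mem_univ j) (Set.mem_univ j') h

theorem block_injective : Injective c.block := fun j j' h => by
  by_contra hne
  have : Disjoint (c.block j) (c.block j') := c.pairwise_disjoint_block hne
  rw [h, disjoint_self_iff_empty] at this
  exact (c.block_nonempty j').ne_empty this

theorem strictMono_toColex_block : StrictMono (toColex ∘ c.block) := fun j j' h => by
  rw [comp_apply, comp_apply, toColex_lt_toColex_iff_max'_lt_max'
    (c.pairwise_disjoint_block h.ne) (c.block_nonempty j) (c.block_nonempty j'),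
    max'_block, max'_block]
  exact c.parts_strictMono h

def blocks : Finset (Finset (Fin n)) := univ.image c.block

theorem coe_blocks : (c.blocks : Set (Finset (Fin n))) = Set.range c.block := by
  simp [blocks]

theorem card_blocks : c.blocks.card = c.length := by
  rw [blocks, card_image_of_injective _ c.block_injective, card_univ, Fintype.card_fin]

theorem prod_blocks {M : Type*} [CommMonoid M] (F : Finset (Fin n) → M) :
    ∏ B ∈ c.blocks, F B = ∏ j, F (c.block j) :=
  prod_image fun _ _ _ _ h => c.block_injective h

theorem blocks_mem_partitionsOf : c.blocks ∈ partitionsOf n := by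
  classical
  refine mem_filter.2 ⟨by simp, fun h => ?_, fun x => ?_⟩
  · obtain ⟨j, -, hj⟩ := mem_image.1 h
    exact (c.block_nonempty j).ne_empty hj
  · obtain ⟨j, hj⟩ := c.cover x
    rw [← coe_block, mem_coe] at hj
    refine ⟨c.block j, ⟨mem_image_of_mem _ (mem_univ j), hj⟩, ?_⟩
    rintro B ⟨hB, hxB⟩
    obtain ⟨j', -, rfl⟩ := mem_image.1 hB
    by_contra hne
    exact disjoint_left.1 (c.pairwise_disjoint_block fun h => hne (congrArg c.block h)) hxB hj

end

theorem ext_of_block {c c' : OrderedFinpartition n} (h : c.length = c'.length)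
    (hb : ∀ j, c.block j = c'.block (Fin.cast h j)) : c = c' := by
  cases c with | mk L size _ emb emb_mono =>
  cases c' with | mk L' size' _ emb' emb_mono' =>
  obtain rfl : L = L' := h
  simp only [← coe_inj, coe_block, Fin.cast_eq_self] at hb
  obtain rfl : size = size' := funext fun j => by
    simpa [Set.ncard_range_of_injective (emb_mono _).injective,
      Set.ncard_range_of_injective (emb_mono' _).injective] using congrArg Set.ncard (hb j)
  obtain rfl : emb = emb' := funext fun j => ((emb_mono j).range_inj (emb_mono' j)).1 (hb j)
  rfl

theorem blocks_injective : Injective (blocks (n := n)) := fun c c' h => by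
  have hlen : c.length = c'.length := by rw [← c.card_blocks, h, c'.card_blocks]
  have hmono : StrictMono (toColex ∘ c'.block ∘ Fin.cast hlen) :=
    c'.strictMono_toColex_block.comp (Fin.castOrderIso hlen).strictMono
  have hrange : Set.range (toColex ∘ c.block) =
      Set.range ((toColex ∘ c'.block) ∘ Fin.cast hlen) := by
    have hsurj : Surjective (Fin.cast hlen) := (finCongr hlen).surjective
    rw [hsurj.range_comp (toColex ∘ c'.block), Set.range_comp,
      Set.range_comp, ← coe_blocks, ← coe_blocks, h]
  have := (c.strictMono_toColex_block.range_inj hmono).1 hrange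
  exact ext_of_block hlen fun j => toColex.injective (congrFun this j)

def ofBlocks {L : ℕ} (P : Fin L → Finset (Fin n)) (hne : ∀ j, (P j).Nonempty)
    (hdisj : Pairwise (Disjoint on P)) (hcover : ∀ x, ∃ j, x ∈ P j)
    (hmono : StrictMono fun j => (P j).max' (hne j)) : OrderedFinpartition n where
  length := L
  partSize j := (P j).card
  partSize_pos j := (hne j).card_pos
  emb j := (P j).orderEmbOfFin rfl
  emb_strictMono j := ((P j).orderEmbOfFin rfl).strictMono
  parts_strictMono := by
    convert hmono using 2 with j
    exact orderEmbOfFin_last rfl (hne j).card_pos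
  disjoint j _ j' _ h := by simpa [onFun, range_orderEmbOfFin, ← disjoint_coe] using hdisj h
  cover x := by simpa [range_orderEmbOfFin] using hcover x

theorem block_ofBlocks {L : ℕ} (P : Fin L → Finset (Fin n)) (hne hdisj hcover hmono) :
    (ofBlocks P hne hdisj hcover hmono).block = P :=
  funext fun j => coe_injective <| by rw [coe_block]; exact range_orderEmbOfFin _ _

theorem blocks_ofBlocks {L : ℕ} (P : Fin L → Finset (Fin n)) (hne hdisj hcover hmono) :
    (ofBlocks P hne hdisj hcover hmono).blocks = univ.image P := by
  rw [blocks, block_ofBlocks]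
  rfl

theorem exists_blocks_eq {π : Finset (Finset (Fin n))} (hπ : π ∈ partitionsOf n) :
    ∃ c : OrderedFinpartition n, c.blocks = π := by
  classical
  obtain ⟨-, hempty, hunique⟩ := mem_filter.1 hπ
  set e := (π.map toColex.toEmbedding).orderEmbOfFin (card_map _)
  have he : ∀ B, B ∈ π ↔ ∃ j, e j = toColex B := fun B => by
    rw [← Set.mem_range, range_orderEmbOfFin]
    simp
  let P j := ofColex (e j)
  have hP : ∀ j, P j ∈ π := fun j => (he _).2 ⟨j, rfl⟩
  have hne : ∀ j, (P j).Nonempty := fun j =>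
    nonempty_iff_ne_empty.2 fun h => hempty (h ▸ hP j)
  have hdisj : Pairwise (Disjoint on P) := fun j j' h => disjoint_left.2 fun x hx hx' =>
    h (e.injective ((hunique x).unique ⟨hP j, hx⟩ ⟨hP j', hx'⟩))
  have hcover : ∀ x, ∃ j, x ∈ P j := fun x => by
    obtain ⟨B, ⟨hB, hxB⟩, -⟩ := hunique x
    obtain ⟨j, hj⟩ := (he B).1 hB
    exact ⟨j, by simpa [P, hj] using hxB⟩
  have hmono : StrictMono fun j => (P j).max' (hne j) := fun j j' h =>
    (toColex_lt_toColex_iff_max'_lt_max' (hdisj h.ne) _ _).1 (e.strictMono h)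
  refine ⟨ofBlocks P hne hdisj hcover hmono, ?_⟩
  rw [blocks_ofBlocks]
  ext B
  simp only [mem_image, mem_univ, true_and, he]
  exact exists_congr fun j => by rw [← toColex_inj, toColex_ofColex]

end OrderedFinpartition

theorem stmt13 (p k m : ℕ) (hm : m ≤ k)
    (g : ℝ → ℝ) (f : EuclideanSpace ℝ (Fin p) → ℝ)
    (hg : ContDiff ℝ (k : ℕ∞) g) (hf : ContDiff ℝ (k : ℕ∞) f)
    (i : Fin m → Fin p) (x : EuclideanSpace ℝ (Fin p)) :
    iteratedFDeriv ℝ m (g ∘ f) x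
        (fun l => EuclideanSpace.single (i l) (1 : ℝ)) =
      ∑ π ∈ partitionsOf m,
        iteratedDeriv π.card g (f x) *
          ∏ B ∈ π,
            iteratedFDeriv ℝ B.card f x
              (fun l => EuclideanSpace.single (i ((B.orderIsoOfFin rfl) l : Fin m)) (1 : ℝ)) := by
  set v : Fin m → EuclideanSpace ℝ (Fin p) := fun l => EuclideanSpace.single (i l) 1
  rw [iteratedFDeriv_comp_apply_eq_sum_orderedFinpartition hg.contDiffAt hf.contDiffAt
    (by exact_mod_cast hm)]
  refine sum_bij (fun c _ => c.blocks) (fun c _ => c.blocks_mem_partitionsOf)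
    (fun c _ c' _ h => OrderedFinpartition.blocks_injective h)
    (fun π hπ => (OrderedFinpartition.exists_blocks_eq hπ).imp fun c hc => ⟨mem_univ c, hc⟩)
    fun c _ => ?_
  rw [iteratedFDeriv_apply_eq_iteratedDeriv_mul_prod, smul_eq_mul, mul_comm, c.card_blocks,
    c.prod_blocks]
  exact congrArg _ <| prod_congr rfl fun j _ =>
    c.apply_emb (fun k e => iteratedFDeriv ℝ k f x (v ∘ e)) j
end
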